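/- Let x ∈ (0,1) be non-dyadic with binary zero-position expansion x = Σ_{n=1}^∞ 2^{-a_n}, where (a_n) is a strictly increasing sequence of positive integers. Then the right-hand derivative of the Takagi function at x equals +∞ if and only if a_n - 2n → ∞ as n → ∞. -/

import Mathlib

open Filter Topology Set

noncomputable def tent (x : ℝ) : ℝ := min (2*x) (2-2*x)

noncomputable def takagi (x : ℝ) : ℝ := ∑' n : ℕ, tent^[n+1] x / 2^(n+1)

def IsDyadic (x : ℝ) : Prop := ∃ k : ℤ, ∃ m : ℕ, x = (k : ℝ) / 2^m

/-!
Write `S_m(x)` for the number of zeros minus the number of ones among the first `m` binary digits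
of `x` and `x_m = {2^m x}`. The self-similarity `T(y) = y + T(2y)/2` (`y ≤ 1/2`),
`T(y) = 1 - y + T(2y-1)/2` (`y ≥ 1/2`) gives
`T(x + h) - T(x) = S_m(x) h + 2^(-m) (T(x_m + 2^m h) - T(x_m))` as long as `x_m + 2^m h ≤ 1`.
Taking `h` with `x_m + 2^m h = 1` shows that slopes `≤ S_m(x)` occur at arbitrarily small `h`.
Conversely, choose `m` with `h` between two consecutive gaps to the next dyadic point; then the
remainder is controlled by `T(y) ≤ (1 - y)(2 + K)` for points `y` whose digit balance never
drops below `-K`, and the slope is at least `inf_{j > m} S_j(x) - 2`. So `T'_+(x) = +∞` iff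
`S_m(x) → ∞`, and for `x = Σ 2^(-a_n)` one has `S_m(x) = m - 2(n+1)` for `a_n ≤ m < a_(n+1)`.
-/

lemma exists_ge_and_not_succ {P : ℕ → Prop} {m n : ℕ} (hm : P m) (hn : ¬ P n)
    (hmn : m ≤ n) :
    ∃ k, m ≤ k ∧ P k ∧ ¬ P (k + 1) := by
  induction n, hmn using Nat.le_induction with
  | base => exact absurd hm hn
  | succ n hmn ih =>
    by_cases h : P n
    · exact ⟨n, hmn, h, hn⟩
    · exact ih h

lemma tent_one_sub (z : ℝ) : tent (1 - z) = tent z := by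
  simp only [tent]
  rw [min_comm]
  ring_nf

lemma mapsTo_tent : MapsTo tent (Icc 0 1) (Icc 0 1) := by
  rintro y ⟨h0, h1⟩
  refine ⟨le_min (by linarith) (by linarith), ?_⟩
  rcases le_total y (1/2) with h | h
  · exact (min_le_left _ _).trans (by linarith)
  · exact (min_le_right _ _).trans (by linarith)

lemma iterate_tent_mem_Icc {y : ℝ} (hy : y ∈ Icc (0:ℝ) 1) (n : ℕ) :
    tent^[n] y ∈ Icc (0:ℝ) 1 :=
  mapsTo_tent.iterate n hy

lemma takagi_term_le {y : ℝ} (hy : y ∈ Icc (0:ℝ) 1) (n : ℕ) :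
    tent^[n+1] y / 2^(n+1) ≤ 1 / 2 / 2^n := by
  rw [pow_succ, div_div, mul_comm]
  gcongr
  exact (iterate_tent_mem_Icc hy _).2

lemma summable_takagi {y : ℝ} (hy : y ∈ Icc (0:ℝ) 1) :
    Summable fun n : ℕ => tent^[n+1] y / 2^(n+1) :=
  (summable_geometric_two' 1).of_nonneg_of_le
    (fun n => div_nonneg (iterate_tent_mem_Icc hy _).1 (by positivity)) (takagi_term_le hy)

lemma takagi_nonneg {y : ℝ} (hy : y ∈ Icc (0:ℝ) 1) : 0 ≤ takagi y :=
  tsum_nonneg fun n => div_nonneg (iterate_tent_mem_Icc hy _).1 (by positivity)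

lemma takagi_le_one {y : ℝ} (hy : y ∈ Icc (0:ℝ) 1) : takagi y ≤ 1 :=
  ((summable_takagi hy).tsum_le_tsum (takagi_term_le hy) (summable_geometric_two' 1)).trans_eq
    (tsum_geometric_two' 1)

lemma takagi_one : takagi 1 = 0 := by
  have h : ∀ n : ℕ, tent^[n+1] (1:ℝ) = 0 := fun n => by
    rw [Function.iterate_succ_apply, show tent 1 = 0 by norm_num [tent]]
    exact Function.iterate_fixed (by norm_num [tent]) n
  simp [takagi, h]

lemma takagi_one_sub (z : ℝ) : takagi (1 - z) = takagi z := by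
  simp only [takagi, Function.iterate_succ_apply, tent_one_sub]

lemma takagi_eq_tent_add {y : ℝ} (hy : y ∈ Icc (0:ℝ) 1) :
    takagi y = tent y / 2 + takagi (tent y) / 2 := by
  rw [takagi, (summable_takagi hy).tsum_eq_zero_add, takagi, ← tsum_div_const]
  congr 1
  · simp
  · refine tsum_congr fun n => ?_
    rw [Function.iterate_succ_apply, pow_succ _ (n + 1), div_div]

lemma takagi_of_le_half {y : ℝ} (h0 : 0 ≤ y) (h1 : y ≤ 1/2) :
    takagi y = y + takagi (2*y) / 2 := by
  have ht : tent y = 2*y := min_eq_left (by linarith)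
  rw [takagi_eq_tent_add ⟨h0, by linarith⟩, ht]
  ring

lemma takagi_of_half_le {y : ℝ} (h0 : 1/2 ≤ y) (h1 : y ≤ 1) :
    takagi y = (1 - y) + takagi (2*y - 1) / 2 := by
  have ht : tent y = 1 - (2*y - 1) := by rw [tent, min_eq_right (by linarith)]; ring
  rw [takagi_eq_tent_add ⟨by linarith, h1⟩, ht, takagi_one_sub]
  ring

lemma fract_two_mul_of_lt_half {y : ℝ} (h0 : 0 ≤ y) (h1 : y < 1/2) : Int.fract (2*y) = 2*y :=
  Int.fract_eq_iff.2 ⟨by linarith, by linarith, 0, by simp⟩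

lemma fract_two_mul_of_half_le {y : ℝ} (h0 : 1/2 ≤ y) (h1 : y < 1) :
    Int.fract (2*y) = 2*y - 1 :=
  Int.fract_eq_iff.2 ⟨by linarith, by linarith, 1, by simp⟩

lemma fract_two_pow_add_mul (m i : ℕ) (x : ℝ) :
    Int.fract (2^(m+i) * x) = Int.fract (2^i * Int.fract (2^m * x)) := by
  have h : 2^i * Int.fract (2^m * x) = 2^(m+i) * x - ((2^i * ⌊2^m * x⌋ : ℤ) : ℝ) := by
    rw [Int.fract]; push_cast; ring
  rw [h, Int.fract_sub_intCast]

/- For `y ∈ [0, 1)` the `(i+1)`-st binary digit of `y` is `0` iff `Int.fract (2^i * y) < 1/2`, so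
`digitBalance m y` is the number of zeros minus the number of ones among its first `m` digits. -/
noncomputable def digitSign (y : ℝ) : ℝ := if y < 1/2 then 1 else -1

noncomputable def digitBalance (m : ℕ) (y : ℝ) : ℝ :=
  ∑ i ∈ Finset.range m, digitSign (Int.fract (2^i * y))

lemma digitBalance_add (m j : ℕ) (y : ℝ) :
    digitBalance (m + j) y = digitBalance m y + digitBalance j (Int.fract (2^m * y)) := by
  simp only [digitBalance, Finset.sum_range_add, fract_two_pow_add_mul]

lemma digitBalance_succ (m : ℕ) (y : ℝ) :
    digitBalance (m + 1) y = digitBalance m y + digitSign (Int.fract (2^m * y)) :=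
  Finset.sum_range_succ _ _

lemma digitBalance_succ' {y : ℝ} (hy : y ∈ Ico (0:ℝ) 1) (j : ℕ) :
    digitBalance (j + 1) y = digitSign y + digitBalance j (Int.fract (2*y)) := by
  rw [add_comm, digitBalance_add, pow_one]
  simp [digitBalance, Int.fract_eq_self.2 hy]

lemma add_le_one_of_fract_two_mul_add_le {y η : ℝ} (hy : y ∈ Ico (0:ℝ) 1)
    (h : Int.fract (2*y) + 2*η ≤ 1) : y + η ≤ 1 := by
  rcases lt_or_ge y (1/2) with hy' | hy'
  · rw [fract_two_mul_of_lt_half hy.1 hy'] at h; linarith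
  · rw [fract_two_mul_of_half_le hy' hy.2] at h; linarith

lemma takagi_add_sub_eq_digitSign {y η : ℝ} (hy : y ∈ Ico (0:ℝ) 1) (hη : 0 ≤ η)
    (h : Int.fract (2*y) + 2*η ≤ 1) :
    takagi (y + η) - takagi y =
      digitSign y * η + (takagi (Int.fract (2*y) + 2*η) - takagi (Int.fract (2*y))) / 2 := by
  have hyη := add_le_one_of_fract_two_mul_add_le hy h
  rcases lt_or_ge y (1/2) with hy' | hy'
  · rw [fract_two_mul_of_lt_half hy.1 hy'] at h ⊢
    rw [digitSign, if_pos hy', takagi_of_le_half (by linarith [hy.1]) (by linarith),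
      takagi_of_le_half hy.1 hy'.le]
    ring_nf
  · rw [fract_two_mul_of_half_le hy' hy.2] at h ⊢
    rw [digitSign, if_neg (not_lt.2 hy'), takagi_of_half_le (by linarith) hyη,
      takagi_of_half_le hy' hy.2.le]
    ring_nf

lemma takagi_add_sub_eq_digitBalance {x h : ℝ} (hx : x ∈ Ico (0:ℝ) 1) (hh : 0 ≤ h) (m : ℕ)
    (hm : Int.fract (2^m * x) + 2^m * h ≤ 1) :
    takagi (x + h) - takagi x = digitBalance m x * h +
      (takagi (Int.fract (2^m * x) + 2^m * h) - takagi (Int.fract (2^m * x))) / 2^m := by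
  induction m with
  | zero => simp [digitBalance, Int.fract_eq_self.2 hx]
  | succ m ih =>
    set u := Int.fract (2^m * x)
    have hu : u ∈ Ico (0:ℝ) 1 := ⟨Int.fract_nonneg _, Int.fract_lt_one _⟩
    have h2u : Int.fract (2^(m+1) * x) = Int.fract (2*u) := by
      rw [fract_two_pow_add_mul, pow_one]
    have hstep : Int.fract (2*u) + 2 * (2^m * h) ≤ 1 := by
      rw [← h2u, ← mul_assoc, ← pow_succ']; exact hm
    rw [ih (add_le_one_of_fract_two_mul_add_le hu hstep),
      takagi_add_sub_eq_digitSign hu (by positivity) hstep, digitBalance_succ, h2u, ← mul_assoc 2,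
      ← pow_succ']
    field_simp
    ring

lemma takagi_le_add_half_pow_of_neg_le_digitBalance (k : ℕ) {y K : ℝ} (hy : y ∈ Ico (0:ℝ) 1)
    (hK : 0 ≤ K) (hS : ∀ j, -K ≤ digitBalance j y) :
    takagi y ≤ (1 - y) * (2 + K) + (1/2)^k := by
  induction k generalizing y K with
  | zero =>
    have := takagi_le_one ⟨hy.1, hy.2.le⟩
    have : 0 ≤ (1 - y) * (2 + K) := mul_nonneg (by linarith [hy.2]) (by linarith)
    simp only [pow_zero]
    linarith
  | succ k ih =>
    have hS1 := fun j => (hS (j + 1)).trans_eq (digitBalance_succ' hy j)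
    rw [pow_succ]
    rcases lt_or_ge y (1/2) with hy' | hy'
    · rw [digitSign, if_pos hy', fract_two_mul_of_lt_half hy.1 hy'] at hS1
      have := ih (y := 2*y) ⟨by linarith [hy.1], by linarith⟩ (K := K + 1) (by linarith)
        (fun j => by linarith [hS1 j])
      rw [takagi_of_le_half hy.1 hy'.le]
      nlinarith
    · rw [digitSign, if_neg (not_lt.2 hy'), fract_two_mul_of_half_le hy' hy.2] at hS1
      have hK1 : 1 ≤ K := by simpa [digitBalance] using hS1 0
      have := ih (y := 2*y - 1) ⟨by linarith, by linarith [hy.2]⟩ (K := K - 1) (by linarith)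
        (fun j => by linarith [hS1 j])
      rw [takagi_of_half_le hy' hy.2.le]
      nlinarith

lemma takagi_le_of_neg_le_digitBalance {y K : ℝ} (hy : y ∈ Ico (0:ℝ) 1) (hK : 0 ≤ K)
    (hS : ∀ j, -K ≤ digitBalance j y) : takagi y ≤ (1 - y) * (2 + K) := by
  refine le_of_forall_pos_le_add fun ε hε => ?_
  obtain ⟨k, hk⟩ := exists_pow_lt_of_lt_one hε (by norm_num : (1/2:ℝ) < 1)
  linarith [takagi_le_add_half_pow_of_neg_le_digitBalance k hy hK hS]

lemma neg_mul_le_takagi_add_sub {u η K : ℝ} (hu0 : 0 ≤ u) (hu : u < 1/2) (hη : 1/2 - u < η)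
    (huη : u + η ≤ 1) (hK : 0 ≤ K) (hS : ∀ j, -K ≤ digitBalance j (2*u)) :
    -(η * (1 + K)) ≤ takagi (u + η) - takagi u := by
  have hT2u := takagi_le_of_neg_le_digitBalance ⟨by linarith, by linarith⟩ hK hS
  have hT := takagi_nonneg (y := 2*(u + η) - 1) ⟨by linarith, by linarith⟩
  rw [takagi_of_le_half hu0 hu.le, takagi_of_half_le (by linarith) huη]
  nlinarith [mul_nonneg hK (by linarith : (0:ℝ) ≤ η - (1 - 2*u)/2)]

/-- The distance from `x` to the next point of `2^(-m) ℤ` strictly above it. -/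
noncomputable def dyadicGap (m : ℕ) (x : ℝ) : ℝ := (1 - Int.fract (2^m * x)) / 2^m

lemma dyadicGap_pos (m : ℕ) (x : ℝ) : 0 < dyadicGap m x :=
  div_pos (sub_pos.2 (Int.fract_lt_one _)) (by positivity)

lemma dyadicGap_le (m : ℕ) (x : ℝ) : dyadicGap m x ≤ (1/2)^m := by
  rw [dyadicGap, one_div_pow, div_le_div_iff_of_pos_right (by positivity)]
  linarith [Int.fract_nonneg (2^m * x)]

lemma tendsto_dyadicGap (x : ℝ) : Tendsto (fun m => dyadicGap m x) atTop (𝓝[>] 0) :=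
  tendsto_nhdsWithin_iff.2 ⟨squeeze_zero (fun m => (dyadicGap_pos m x).le) (dyadicGap_le · x)
    (tendsto_pow_atTop_nhds_zero_of_lt_one (by norm_num) (by norm_num)),
    Eventually.of_forall (dyadicGap_pos · x)⟩

lemma fract_add_two_pow_mul_dyadicGap (m : ℕ) (x : ℝ) :
    Int.fract (2^m * x) + 2^m * dyadicGap m x = 1 := by
  rw [dyadicGap, mul_div_cancel₀ _ (by positivity)]
  ring

lemma takagi_slope_dyadicGap_le {x : ℝ} (hx : x ∈ Ico (0:ℝ) 1) (m : ℕ) :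
    (takagi (x + dyadicGap m x) - takagi x) / dyadicGap m x ≤ digitBalance m x := by
  have hgap := fract_add_two_pow_mul_dyadicGap m x
  rw [div_le_iff₀ (dyadicGap_pos m x),
    takagi_add_sub_eq_digitBalance hx (dyadicGap_pos m x).le m hgap.le, hgap, takagi_one,
    zero_sub, neg_div]
  have := takagi_nonneg (y := Int.fract (2^m * x)) ⟨Int.fract_nonneg _, (Int.fract_lt_one _).le⟩
  have : 0 ≤ takagi (Int.fract (2^m * x)) / 2^m := by positivity
  linarith

lemma dyadicGap_succ (m : ℕ) (x : ℝ) :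
    dyadicGap (m+1) x = (1 - Int.fract (2 * Int.fract (2^m * x))) / 2 / 2^m := by
  rw [dyadicGap, fract_two_pow_add_mul, pow_one, pow_succ, mul_comm _ (2:ℝ), div_mul_eq_div_div]

lemma fract_two_pow_mul_lt_half_of_dyadicGap_lt {m : ℕ} {x : ℝ}
    (h : dyadicGap (m+1) x < dyadicGap m x) : Int.fract (2^m * x) < 1/2 := by
  by_contra! hu
  rw [dyadicGap_succ, fract_two_mul_of_half_le hu (Int.fract_lt_one _), dyadicGap] at h
  have : (1 - (2 * Int.fract (2^m * x) - 1)) / 2 / 2^m = (1 - Int.fract (2^m * x)) / 2^m := by ring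
  linarith

lemma mul_le_takagi_add_sub {x h L : ℝ} {m : ℕ} (hx : x ∈ Ico (0:ℝ) 1)
    (hlt : dyadicGap (m+1) x < h) (hle : h ≤ dyadicGap m x)
    (hL : ∀ j, m + 1 ≤ j → L ≤ digitBalance j x) :
    (L - 2) * h ≤ takagi (x + h) - takagi x := by
  have hh0 : 0 < h := (dyadicGap_pos _ _).trans hlt
  have hu_half := fract_two_pow_mul_lt_half_of_dyadicGap_lt (hlt.trans_le hle)
  rw [dyadicGap_succ] at hlt
  set u := Int.fract (2^m * x)
  have hu : u ∈ Ico (0:ℝ) 1 := ⟨Int.fract_nonneg _, Int.fract_lt_one _⟩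
  have h2m : (0:ℝ) < 2^m := by positivity
  rw [fract_two_mul_of_lt_half hu.1 hu_half, div_div, div_lt_iff₀ (by positivity)] at hlt
  rw [dyadicGap, le_div_iff₀ h2m] at hle
  set K := digitBalance (m+1) x - L
  have hS : ∀ j, -K ≤ digitBalance j (2*u) := fun j => by
    have := digitBalance_add (m+1) j x
    rw [fract_two_pow_add_mul, pow_one, fract_two_mul_of_lt_half hu.1 hu_half] at this
    linarith [hL (m + 1 + j) (by omega)]
  have hcross := neg_mul_le_takagi_add_sub hu.1 hu_half (η := 2^m * h) (K := K) (by linarith)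
    (by linarith) (by linarith [hL (m+1) le_rfl]) hS
  have hsucc : digitBalance (m+1) x = digitBalance m x + 1 := by
    rw [digitBalance_succ, digitSign, if_pos hu_half]
  have hrest : -(h * (1 + K)) ≤ (takagi (u + 2^m * h) - takagi u) / 2^m :=
    (le_div_iff₀ h2m).2 (by linarith)
  have hL2 : (L - 2) * h = digitBalance m x * h - h * (1 + K) := by
    simp only [K, hsucc]; ring
  rw [takagi_add_sub_eq_digitBalance hx hh0.le m (by linarith)]
  linarith

theorem tendsto_takagi_slope_atTop_iff {x : ℝ} (hx : x ∈ Ico (0:ℝ) 1) :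
    Tendsto (fun h => (takagi (x + h) - takagi x) / h) (𝓝[>] 0) atTop ↔
      Tendsto (fun m => digitBalance m x) atTop atTop := by
  refine ⟨fun hT => tendsto_atTop_mono (takagi_slope_dyadicGap_le hx)
    (hT.comp (tendsto_dyadicGap x)), fun hS => tendsto_atTop.2 fun M => ?_⟩
  obtain ⟨m₀, hm₀⟩ := tendsto_atTop.1 hS (M + 2) |>.exists_forall_of_atTop
  filter_upwards [Ioo_mem_nhdsGT (dyadicGap_pos m₀ x)] with h ⟨hh0, hh⟩
  have hsmall := (tendsto_nhdsWithin_iff.1 (tendsto_dyadicGap x)).1.eventually_lt_const hh0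
  obtain ⟨n, hn, hgap⟩ := (hsmall.and (eventually_ge_atTop m₀)).exists
  obtain ⟨m, hm, hle, hlt⟩ := exists_ge_and_not_succ (P := fun m => h ≤ dyadicGap m x) hh.le
    (not_le.2 hn) hgap
  rw [le_div_iff₀ hh0]
  linarith [mul_le_takagi_add_sub hx (not_le.1 hlt) hle (L := M + 2)
    fun j hj => hm₀ j (by omega)]

section BinaryDigits

open Classical

/- `binaryTail S i = Σ_{n ∈ S, n > i} 2^(i - n)`: the binary digits of `Σ_{n ∈ S} 2^(-n)`
after position `i`. -/
noncomputable def binaryTail (S : Set ℕ) (i : ℕ) : ℝ :=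
  ∑' k : ℕ, if k + i + 1 ∈ S then (1/2:ℝ)^(k+1) else 0

lemma summable_binaryTail (S : Set ℕ) (i : ℕ) :
    Summable fun k : ℕ => if k + i + 1 ∈ S then (1/2:ℝ)^(k+1) else 0 :=
  (summable_geometric_two.mul_left (1/2)).of_nonneg_of_le (fun k => by positivity) fun k => by
    split_ifs
    · exact (pow_succ' _ _).le
    · positivity

lemma binaryTail_nonneg (S : Set ℕ) (i : ℕ) : 0 ≤ binaryTail S i :=
  tsum_nonneg fun k => by positivity

lemma binaryTail_le_one (S : Set ℕ) (i : ℕ) : binaryTail S i ≤ 1 :=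
  calc binaryTail S i ≤ ∑' k : ℕ, 1/2 * (1/2:ℝ)^k :=
        (summable_binaryTail S i).tsum_le_tsum (fun k => by
          split_ifs
          · exact (pow_succ' _ _).le
          · positivity) (summable_geometric_two.mul_left _)
    _ = 1 := by rw [tsum_mul_left, tsum_geometric_two]; norm_num

lemma binaryTail_eq (S : Set ℕ) (i : ℕ) :
    binaryTail S i = ((if i + 1 ∈ S then 1 else 0) + binaryTail S (i + 1)) / 2 := by
  rw [binaryTail, (summable_binaryTail S i).tsum_eq_zero_add, binaryTail, add_div,
    ← tsum_div_const]
  congr 1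
  · split_ifs <;> simp_all
  · refine tsum_congr fun k => ?_
    rw [show k + 1 + i + 1 = k + (i + 1) + 1 by ring]
    split_ifs <;> ring

lemma exists_two_pow_mul_eq_add_binaryTail (S : Set ℕ) (i : ℕ) :
    ∃ N : ℤ, 2^i * ∑' k : ℕ, S.indicator (fun k => (1/2:ℝ)^k) k = N + binaryTail S i := by
  simp only [Set.indicator_apply]
  have hsum : Summable fun k : ℕ => if k ∈ S then (1/2:ℝ)^k else 0 :=
    summable_geometric_two.of_nonneg_of_le (fun k => by positivity) fun k => by
      split_ifs <;> norm_num
  refine ⟨∑ k ∈ Finset.range (i + 1), if k ∈ S then 2^(i - k) else 0, ?_⟩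
  rw [← hsum.sum_add_tsum_nat_add (i + 1), mul_add, Finset.mul_sum, binaryTail, ← tsum_mul_left]
  congr 1
  · push_cast
    refine Finset.sum_congr rfl fun k hk => ?_
    have hki : k + (i - k) = i := by have := Finset.mem_range.1 hk; omega
    split_ifs
    · rw [← hki, pow_add, add_tsub_cancel_left, mul_comm, ← mul_assoc, ← mul_pow]; norm_num
    · simp
  · refine tsum_congr fun k => ?_
    simp only [← add_assoc]
    split_ifs
    · rw [show k + i + 1 = i + (k + 1) by ring, pow_add, ← mul_assoc, ← mul_pow]; norm_num
    · simp

lemma fract_two_pow_mul_eq_binaryTail {S : Set ℕ} {x : ℝ} (hnd : ¬ IsDyadic x)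
    (hx : x = ∑' k : ℕ, S.indicator (fun k => (1/2:ℝ)^k) k) (i : ℕ) :
    Int.fract (2^i * x) = binaryTail S i := by
  obtain ⟨N, hN⟩ := exists_two_pow_mul_eq_add_binaryTail S i
  rw [← hx] at hN
  refine Int.fract_eq_iff.2
    ⟨binaryTail_nonneg S i, (binaryTail_le_one S i).lt_of_ne fun h1 => ?_, N, by linarith⟩
  exact hnd ⟨N + 1, i, by rw [eq_div_iff (by positivity)]; push_cast; linarith⟩

lemma fract_two_pow_mul_lt_half_iff {S : Set ℕ} {x : ℝ} (hnd : ¬ IsDyadic x)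
    (hx : x = ∑' k : ℕ, S.indicator (fun k => (1/2:ℝ)^k) k) (i : ℕ) :
    Int.fract (2^i * x) < 1/2 ↔ i + 1 ∉ S := by
  have hlt : binaryTail S (i + 1) < 1 :=
    fract_two_pow_mul_eq_binaryTail hnd hx (i + 1) ▸ Int.fract_lt_one _
  rw [fract_two_pow_mul_eq_binaryTail hnd hx, binaryTail_eq]
  by_cases hi : i + 1 ∈ S
  · simp only [hi, if_true, not_true_eq_false, iff_false, not_lt]
    linarith [binaryTail_nonneg S (i + 1)]
  · simp only [hi, if_false, not_false_eq_true, iff_true]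
    linarith

end BinaryDigits

section Counting

open Classical

variable {a : ℕ → ℕ} {x : ℝ} {m n : ℕ}

lemma card_filter_succ_mem_range (ha : StrictMono a) (ha0 : 1 ≤ a 0) (hn : a n ≤ m)
    (hn' : m < a (n + 1)) :
    ((Finset.range m).filter fun i => i + 1 ∈ Set.range a).card = n + 1 := by
  have hpos : ∀ j, 1 ≤ a j := fun j => ha0.trans (ha.monotone (Nat.zero_le j))
  have himage : (Finset.range m).filter (fun i => i + 1 ∈ Set.range a) =
      (Finset.range (n + 1)).image fun j => a j - 1 := by
    ext i
    simp only [Finset.mem_filter, Finset.mem_range, Finset.mem_image, Set.mem_range]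
    constructor
    · rintro ⟨hi, j, hj⟩
      exact ⟨j, ha.lt_iff_lt.1 (by omega), by omega⟩
    · rintro ⟨j, hj, rfl⟩
      have := ha.monotone (Nat.lt_succ_iff.1 hj)
      have := hpos j
      exact ⟨by omega, j, by omega⟩
  rw [himage, Finset.card_image_of_injective _ fun p q hpq => ha.injective (by
    have := hpos p; have := hpos q; omega), Finset.card_range]

lemma digitBalance_eq (ha : StrictMono a) (ha0 : 1 ≤ a 0)
    (hdig : ∀ i, Int.fract (2^i * x) < 1/2 ↔ i + 1 ∉ Set.range a) (hn : a n ≤ m)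
    (hn' : m < a (n + 1)) :
    digitBalance m x = m - 2 * (n + 1) := by
  have hsign : ∀ i, digitSign (Int.fract (2^i * x)) =
      1 - 2 * (if i + 1 ∈ Set.range a then 1 else 0) := fun i => by
    by_cases hi : i + 1 ∈ Set.range a
    · rw [digitSign, if_neg (mt (hdig i).1 (not_not.2 hi)), if_pos hi]; ring
    · rw [digitSign, if_pos ((hdig i).2 hi), if_neg hi]; ring
  simp only [digitBalance, hsign, Finset.sum_sub_distrib, ← Finset.mul_sum, Finset.sum_boole,
    card_filter_succ_mem_range ha ha0 hn hn', Finset.sum_const, Finset.card_range]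
  push_cast
  ring

lemma tendsto_digitBalance_atTop_iff (ha : StrictMono a) (ha0 : 1 ≤ a 0)
    (hdig : ∀ i, Int.fract (2^i * x) < 1/2 ↔ i + 1 ∉ Set.range a) :
    Tendsto (fun m => digitBalance m x) atTop atTop ↔
      Tendsto (fun n : ℕ => (a n : ℝ) - 2 * (n + 1)) atTop atTop := by
  constructor
  · intro hS
    refine (hS.comp ha.tendsto_atTop).congr fun n => ?_
    exact digitBalance_eq ha ha0 hdig le_rfl (ha (Nat.lt_succ_self n))
  · intro hA
    refine tendsto_atTop.2 fun M => ?_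
    obtain ⟨N, hN⟩ := (tendsto_atTop.1 hA M).exists_forall_of_atTop
    filter_upwards [eventually_ge_atTop (a N)] with m hm
    obtain ⟨n, hNn, hn, hn'⟩ := exists_ge_and_not_succ (P := fun n => a n ≤ m) hm
      (not_le.2 (Nat.lt_of_lt_of_le (Nat.lt_succ_self m) (ha.id_le (m + 1))))
      (((ha.id_le N).trans hm).trans (Nat.le_succ m))
    rw [digitBalance_eq ha ha0 hdig hn (not_le.1 hn')]
    have : (a n : ℝ) ≤ m := by exact_mod_cast hn
    linarith [hN n hNn]

end Counting

theorem takagi_rightDeriv_top_iff (x : ℝ) (hx : x ∈ Set.Ioo (0:ℝ) 1) (hnd : ¬ IsDyadic x)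
    (a : ℕ → ℕ) (ha : StrictMono a) (ha1 : 1 ≤ a 0)
    (hxa : x = ∑' n : ℕ, (1/2 : ℝ)^(a n)) :
    Tendsto (fun h => (takagi (x + h) - takagi x) / h) (𝓝[>] (0:ℝ)) atTop ↔
      Tendsto (fun n : ℕ => (a n : ℝ) - 2 * (n + 1)) atTop atTop := by
  have hx' : x = ∑' k : ℕ, (Set.range a).indicator (fun k => (1/2:ℝ)^k) k := by
    rw [hxa, ← tsum_range _ ha.injective, tsum_subtype]
  rw [tendsto_takagi_slope_atTop_iff (Ioo_subset_Ico_self hx),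
    tendsto_digitBalance_atTop_iff ha ha1 (fract_two_pow_mul_lt_half_iff hnd hx')]
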